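/- Let {M_c}_{c∈C} be a POVM on ℂ^N indexed by a finite set C, and let ρ, σ be density matrices on ℂ^N. Then the square root of the quantum fidelity is bounded by the classical Bhattacharyya coefficient of the induced outcome distributions: Tr √(√ρ σ √ρ) ≤ Σ_{c∈C} √(Tr[M_c ρ] · Tr[M_c σ]). -/

import Mathlib

open Matrix
open scoped ComplexOrder

/-- Positive-semidefinite square root of a matrix (zero if not PSD). -/
noncomputable def psdSqrt {N : ℕ} (A : Matrix (Fin N) (Fin N) ℂ) :
    Matrix (Fin N) (Fin N) ℂ :=
  open scoped Classical in
  if h : A.PosSemidef then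
    h.1.eigenvectorUnitary.1 * diagonal ((↑) ∘ (√·) ∘ h.1.eigenvalues) *
      (star h.1.eigenvectorUnitary : Matrix (Fin N) (Fin N) ℂ)
  else 0

/-- Root fidelity `Tr √(√ρ σ √ρ)`. -/
noncomputable def rootFidelity {N : ℕ} (ρ σ : Matrix (Fin N) (Fin N) ℂ) : ℝ :=
  (psdSqrt (psdSqrt ρ * σ * psdSqrt ρ)).trace.re

/-- Fidelity `F(ρ,σ) = (Tr √(√ρ σ √ρ))²`. -/
noncomputable def fidelity {N : ℕ} (ρ σ : Matrix (Fin N) (Fin N) ℂ) : ℝ :=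
  (rootFidelity ρ σ) ^ 2

/-- A density matrix: positive semidefinite with trace one. -/
def IsDensityMatrix {N : ℕ} (ρ : Matrix (Fin N) (Fin N) ℂ) : Prop :=
  ρ.PosSemidef ∧ ρ.trace = 1

/-- A POVM: a family of PSD matrices summing to the identity. -/
def IsPOVM {N : ℕ} {C : Type*} [Fintype C] (M : C → Matrix (Fin N) (Fin N) ℂ) : Prop :=
  (∀ c, (M c).PosSemidef) ∧ ∑ c, M c = 1

/-- A Kraus family: `∑ Eₖᴴ Eₖ = I`. -/
def IsKrausFamily {N : ℕ} {K : Type*} [Fintype K] (E : K → Matrix (Fin N) (Fin N) ℂ) : Prop :=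
  ∑ k, (E k)ᴴ * E k = 1

/-- The quantum channel associated with a Kraus family. -/
noncomputable def channel {N : ℕ} {K : Type*} [Fintype K]
    (E : K → Matrix (Fin N) (Fin N) ℂ) (σ : Matrix (Fin N) (Fin N) ℂ) :
    Matrix (Fin N) (Fin N) ℂ :=
  ∑ k, E k * σ * (E k)ᴴ

/-- Minimum of `f` over all labels distinct from `cstar` (needs `|C| ≥ 2`). -/
noncomputable def minErase {C : Type*} [Fintype C] [DecidableEq C] {α : Type*} [LinearOrder α]
    (cstar : C) (h : 1 < Fintype.card C) (f : C → α) : α :=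
  (Finset.univ.erase cstar).inf'
    ((Finset.erase_nonempty (Finset.mem_univ cstar)).mpr
      (Finset.one_lt_card_iff_nontrivial.mp (by simpa [Finset.card_univ] using h))) f

/-! The root fidelity is `Tr |A|` for `A = √σ √ρ`, and the POVM splits `A` as
`∑_c (√M_c √σ)ᴴ (√M_c √ρ)`. Polar decomposition gives a unitary `U` with `|A| = Uᴴ A`, so
`Tr |A| = ∑_c Tr ((√M_c √σ U)ᴴ (√M_c √ρ))`, and the Cauchy–Schwarz inequality for the
Hilbert–Schmidt inner product bounds the `c`-th term by `√(Tr[M_c ρ] Tr[M_c σ])`. -/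

open scoped MatrixOrder

section PolarDecomposition

variable {𝕜 E : Type*} [RCLike 𝕜] [NormedAddCommGroup E] [InnerProductSpace 𝕜 E]
  [FiniteDimensional 𝕜 E]

-- `T x ↦ S x` is a well-defined isometry on the range of `T`; extend it to all of `E`.
theorem LinearMap.exists_linearIsometryEquiv_apply_eq_of_norm_eq {S T : E →ₗ[𝕜] E}
    (h : ∀ x, ‖S x‖ = ‖T x‖) : ∃ u : E ≃ₗᵢ[𝕜] E, ∀ x, u (T x) = S x := by
  have hker : LinearMap.ker T ≤ LinearMap.ker S := fun x hx => by
    rw [LinearMap.mem_ker, ← norm_eq_zero, h x, norm_eq_zero]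
    exact hx
  let L : LinearMap.range T →ₗ[𝕜] E :=
    (LinearMap.ker T).liftQ S hker ∘ₗ T.quotKerEquivRange.symm.toLinearMap
  have hL (x : E) : L ⟨T x, x, rfl⟩ = S x := by
    change (LinearMap.ker T).liftQ S hker (T.quotKerEquivRange.symm ⟨T x, x, rfl⟩) = S x
    rw [T.quotKerEquivRange_symm_apply_image x ⟨x, rfl⟩]
    rfl
  let Li : LinearMap.range T →ₗᵢ[𝕜] E :=
    { toLinearMap := L
      norm_map' := by
        rintro ⟨_, x, rfl⟩
        rw [hL, h x]
        rfl }
  refine ⟨Li.extend.toLinearIsometryEquiv rfl, fun x => ?_⟩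
  rw [LinearIsometry.toLinearIsometryEquiv_apply, ← hL]
  exact Li.extend_apply ⟨T x, x, rfl⟩

theorem ContinuousLinearMap.exists_mem_unitary_mul_eq_of_star_mul_self_eq [CompleteSpace E]
    {S T : E →L[𝕜] E} (h : star S * S = star T * T) :
    ∃ u ∈ unitary (E →L[𝕜] E), u * T = S := by
  have hnorm (x : E) : ‖S x‖ = ‖T x‖ := by
    rw [← sq_eq_sq₀ (norm_nonneg _) (norm_nonneg _), apply_norm_sq_eq_inner_adjoint_left,
      apply_norm_sq_eq_inner_adjoint_left]
    exact congrArg (fun A : E →L[𝕜] E => RCLike.re (inner 𝕜 (A x) x)) h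
  obtain ⟨u, hu⟩ := LinearMap.exists_linearIsometryEquiv_apply_eq_of_norm_eq
    (S := S.toLinearMap) (T := T.toLinearMap) hnorm
  exact ⟨Unitary.linearIsometryEquiv.symm u, SetLike.coe_mem _, ext hu⟩

end PolarDecomposition

namespace Matrix

variable {𝕜 m n : Type*} [RCLike 𝕜] [Fintype m] [Fintype n]

theorem trace_conjTranspose_mul_eq_inner (X Y : Matrix m n 𝕜) :
    (Xᴴ * Y).trace = inner 𝕜 (WithLp.toLp 2 X.vec) (WithLp.toLp 2 Y.vec) := by
  rw [EuclideanSpace.inner_eq_star_dotProduct, dotProduct_comm, star_vec_dotProduct_vec]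

theorem re_trace_conjTranspose_mul_le (X Y : Matrix m n 𝕜) :
    RCLike.re (Xᴴ * Y).trace ≤
      √(RCLike.re (Xᴴ * X).trace * RCLike.re (Yᴴ * Y).trace) := by
  simp only [trace_conjTranspose_mul_eq_inner, inner_self_eq_norm_sq, ← mul_pow]
  rw [Real.sqrt_sq (by positivity)]
  exact re_inner_le_norm _ _

variable [DecidableEq n]

theorem exists_mem_unitaryGroup_mul_eq_of_conjTranspose_mul_self_eq {A B : Matrix n n 𝕜}
    (h : Aᴴ * A = Bᴴ * B) : ∃ U ∈ unitaryGroup n 𝕜, U * B = A := by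
  let Φ := toEuclideanCLM (n := n) (𝕜 := 𝕜)
  obtain ⟨u, hu, huB⟩ :=
    ContinuousLinearMap.exists_mem_unitary_mul_eq_of_star_mul_self_eq (S := Φ A) (T := Φ B)
      (by simp only [← map_star, ← map_mul, star_eq_conjTranspose, h])
  refine ⟨Φ.symm u, Unitary.map_mem _ hu, ?_⟩
  rw [← Φ.symm_apply_apply A, ← huB, map_mul, StarAlgEquiv.symm_apply_apply]

theorem exists_mem_unitaryGroup_mul_abs_eq (A : Matrix n n 𝕜) :
    ∃ U ∈ unitaryGroup n 𝕜, U * CFC.abs A = A :=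
  exists_mem_unitaryGroup_mul_eq_of_conjTranspose_mul_self_eq <| by
    rw [(CFC.abs_nonneg A).posSemidef.1.eq, CFC.abs_mul_abs, star_eq_conjTranspose]

theorem re_trace_abs_le_sum {ι : Type*} [Fintype ι] (A : Matrix n n 𝕜)
    (X Y : ι → Matrix m n 𝕜) (hA : A = ∑ i, (X i)ᴴ * Y i) :
    RCLike.re (CFC.abs A).trace ≤
      ∑ i, √(RCLike.re ((X i)ᴴ * X i).trace * RCLike.re ((Y i)ᴴ * Y i).trace) := by
  obtain ⟨U, hU, hUA⟩ := exists_mem_unitaryGroup_mul_abs_eq A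
  have habs : CFC.abs A = ∑ i, (X i * U)ᴴ * Y i := by
    calc CFC.abs A = star U * (U * CFC.abs A) := by
          rw [← mul_assoc, Unitary.star_mul_self_of_mem hU, one_mul]
      _ = ∑ i, (X i * U)ᴴ * Y i := by
          rw [hUA, hA, Finset.mul_sum]
          simp only [conjTranspose_mul, star_eq_conjTranspose, Matrix.mul_assoc]
  have htrace (i : ι) : ((X i * U)ᴴ * (X i * U)).trace = ((X i)ᴴ * X i).trace := by
    rw [conjTranspose_mul, Matrix.mul_assoc, trace_mul_comm, Matrix.mul_assoc, Matrix.mul_assoc,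
      ← star_eq_conjTranspose, Unitary.mul_star_self_of_mem hU, Matrix.mul_one]
  rw [habs, trace_sum, map_sum]
  gcongr with i
  rw [← htrace i]
  exact re_trace_conjTranspose_mul_le _ _

theorem conjTranspose_sqrt_mul_mul_sqrt_mul {k : Type*} {M : Matrix n n 𝕜} (hM : 0 ≤ M)
    (B C : Matrix n k 𝕜) : (CFC.sqrt M * B)ᴴ * (CFC.sqrt M * C) = Bᴴ * M * C := by
  rw [conjTranspose_mul, (CFC.sqrt_nonneg M).posSemidef.1.eq, Matrix.mul_assoc,
    ← Matrix.mul_assoc (CFC.sqrt M), CFC.sqrt_mul_sqrt_self M hM, Matrix.mul_assoc]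

theorem trace_sqrt_mul_mul_sqrt {ρ : Matrix n n 𝕜} (hρ : 0 ≤ ρ) (M : Matrix n n 𝕜) :
    (CFC.sqrt ρ * M * CFC.sqrt ρ).trace = (M * ρ).trace := by
  rw [trace_mul_comm, ← mul_assoc, CFC.sqrt_mul_sqrt_self ρ hρ, trace_mul_comm]

end Matrix

lemma psdSqrt_eq_sqrt {N : ℕ} {A : Matrix (Fin N) (Fin N) ℂ} (hA : 0 ≤ A) :
    psdSqrt A = CFC.sqrt A := by
  rw [psdSqrt, dif_pos hA.posSemidef, CFC.sqrt_eq_real_sqrt A hA, cfcₙ_eq_cfc,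
    hA.posSemidef.1.cfc_eq]
  rfl

lemma rootFidelity_eq_re_trace_abs {N : ℕ} {ρ σ : Matrix (Fin N) (Fin N) ℂ} (hρ : 0 ≤ ρ)
    (hσ : 0 ≤ σ) : rootFidelity ρ σ = (CFC.abs (CFC.sqrt σ * CFC.sqrt ρ)).trace.re := by
  have hgram : psdSqrt ρ * σ * psdSqrt ρ =
      star (CFC.sqrt σ * CFC.sqrt ρ) * (CFC.sqrt σ * CFC.sqrt ρ) := by
    rw [psdSqrt_eq_sqrt hρ, star_eq_conjTranspose, conjTranspose_sqrt_mul_mul_sqrt_mul hσ,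
      (CFC.sqrt_nonneg ρ).posSemidef.1.eq]
  rw [rootFidelity, hgram, psdSqrt_eq_sqrt (star_mul_self_nonneg _), CFC.abs]

/-- **Root fidelity is bounded by the classical Bhattacharyya coefficient**
of the outcome distributions induced by any POVM. -/
theorem rootFidelity_le_bhattacharyya
    {N : ℕ} {C : Type*} [Fintype C]
    (M : C → Matrix (Fin N) (Fin N) ℂ) (hM : IsPOVM M)
    (ρ σ : Matrix (Fin N) (Fin N) ℂ)
    (hρ : IsDensityMatrix ρ) (hσ : IsDensityMatrix σ) :
    rootFidelity ρ σ ≤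
      ∑ c, Real.sqrt ((M c * ρ).trace.re * (M c * σ).trace.re) := by
  obtain ⟨hMpsd, hMsum⟩ := hM
  have hρ₀ : 0 ≤ ρ := hρ.1.nonneg
  have hσ₀ : 0 ≤ σ := hσ.1.nonneg
  have hdecomp : CFC.sqrt σ * CFC.sqrt ρ =
      ∑ c, (CFC.sqrt (M c) * CFC.sqrt σ)ᴴ * (CFC.sqrt (M c) * CFC.sqrt ρ) := by
    simp only [conjTranspose_sqrt_mul_mul_sqrt_mul (hMpsd _).nonneg,
      (CFC.sqrt_nonneg σ).posSemidef.1.eq, ← Finset.sum_mul, ← Finset.mul_sum, hMsum, mul_one]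
  rw [rootFidelity_eq_re_trace_abs hρ₀ hσ₀]
  refine (re_trace_abs_le_sum _ _ _ hdecomp).trans_eq (Finset.sum_congr rfl fun c _ => ?_)
  simp only [conjTranspose_sqrt_mul_mul_sqrt_mul (hMpsd c).nonneg,
    (CFC.sqrt_nonneg σ).posSemidef.1.eq, (CFC.sqrt_nonneg ρ).posSemidef.1.eq,
    trace_sqrt_mul_mul_sqrt hρ₀, trace_sqrt_mul_mul_sqrt hσ₀, mul_comm, RCLike.re_to_complex]
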